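/- Let P be a distribution on {0,1}^m and let d_E(P,U_m) denote the subexponential distance to uniform. Then d_E(P,U_m) ≤ √((ln2/2)·KL(P‖U_m)) if KL(P‖U_m) ≤ 1/(2 ln 2), and d_E(P,U_m) ≤ (ln2/2)·KL(P‖U_m) + 1/4 otherwise. -/

import Mathlib

open scoped BigOperators

/-- A probability mass function on a finite set. -/
def IsPMF {X : Type*} [Fintype X] (P : X → ℝ) : Prop :=
  (∀ x, 0 ≤ P x) ∧ ∑ x, P x = 1

/-- `f : {0,1}^m → ℝ` is a subexponential test function: `f(U_m)` is mean-zero and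
its mgf is bounded as for a subgaussian with parameter `1/2`, for `|t| ≤ 2`. -/
def SubeTest (m : ℕ) (f : (Fin m → Bool) → ℝ) : Prop :=
  (∑ x, ((2 : ℝ) ^ m)⁻¹ * f x) = 0 ∧
  ∀ t : ℝ, |t| ≤ 2 → Real.log (∑ x, ((2 : ℝ) ^ m)⁻¹ * Real.exp (t * f x)) ≤ t ^ 2 / 8

/-- The subexponential distance between distributions on `{0,1}^m`. -/
noncomputable def dE (m : ℕ) (P Q : (Fin m → Bool) → ℝ) : ℝ :=
  sSup {r : ℝ | ∃ f, SubeTest m f ∧ r = ∑ x, (P x - Q x) * f x}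

/-- KL divergence (in bits) from a distribution on `{0,1}^m` to uniform. -/
noncomputable def KLu (m : ℕ) (P : (Fin m → Bool) → ℝ) : ℝ :=
  ∑ x, P x * Real.logb 2 ((2 : ℝ) ^ m * P x)

/-!
By the Donsker–Varadhan inequality, for every test function `f` and `0 < t ≤ 2`,
`t · E_P[f] ≤ KL(P‖U) + ln E_U[e^{t f}] ≤ K + t²/8` with `K = ln 2 · KLu m P` the divergence
in nats, while `E_U[f] = 0`. Hence `E_P[f] - E_U[f] ≤ K/t + t/8`. Minimising over `t ∈ (0, 2]`
gives `√(K/2)` at `t = √(8K)` when `K ≤ 1/2`, and `K/2 + 1/4` at `t = 2` otherwise.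
-/

open Real

lemma mul_log_div_le_sub {p w : ℝ} (hp : 0 ≤ p) (hw : 0 < w) : p * log (w / p) ≤ w - p := by
  rcases hp.eq_or_lt with rfl | hp
  · simpa using hw.le
  · calc p * log (w / p) ≤ p * (w / p - 1) :=
          mul_le_mul_of_nonneg_left (log_le_sub_one_of_pos (by positivity)) hp.le
      _ = w - p := by field_simp

section DonskerVaradhan

variable {X : Type*} [Fintype X] {P Q : X → ℝ}

/-- The Donsker–Varadhan inequality on a finite set. -/
theorem sum_mul_le_sum_mul_log_div_add_log_sum_mul_exp (hP : IsPMF P) (hQ : ∀ x, 0 < Q x)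
    (g : X → ℝ) :
    ∑ x, P x * g x ≤ ∑ x, P x * log (P x / Q x) + log (∑ x, Q x * exp (g x)) := by
  set S := ∑ x, Q x * exp (g x)
  have hX : Nonempty X := by
    by_contra h
    simpa [not_nonempty_iff.mp h] using hP.2
  have hS : 0 < S := Finset.sum_pos (fun x _ => by have := hQ x; positivity) Finset.univ_nonempty
  -- compare `P` pointwise with the tilted probability vector `Q e^g / S`
  have hpoint : ∀ x, P x * g x - P x * log (P x / Q x) - P x * log S
      ≤ Q x * exp (g x) / S - P x := by
    intro x
    have hQx := hQ x
    refine le_trans (le_of_eq ?_) (mul_log_div_le_sub (hP.1 x) (by positivity))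
    rcases (hP.1 x).eq_or_lt with hPx | hPx
    · simp [← hPx]
    · rw [log_div (by positivity) hPx.ne', log_div (by positivity) hS.ne',
        log_div hPx.ne' hQx.ne', log_mul hQx.ne' (exp_pos _).ne', log_exp]
      ring
  have hsum := Finset.sum_le_sum fun x (_ : x ∈ Finset.univ) => hpoint x
  rw [Finset.sum_sub_distrib, Finset.sum_sub_distrib, Finset.sum_sub_distrib, ← Finset.sum_mul,
    ← Finset.sum_div, hP.2, div_self hS.ne'] at hsum
  linarith

theorem sum_mul_log_div_nonneg (hP : IsPMF P) (hQ : ∀ x, 0 < Q x) (hQ1 : ∑ x, Q x = 1) :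
    0 ≤ ∑ x, P x * log (P x / Q x) := by
  simpa [hQ1] using sum_mul_le_sum_mul_log_div_add_log_sum_mul_exp hP hQ 0

end DonskerVaradhan

section Uniform

variable {m : ℕ} {P : (Fin m → Bool) → ℝ}

lemma sum_uniform (m : ℕ) : ∑ _x : Fin m → Bool, ((2 : ℝ) ^ m)⁻¹ = 1 := by
  simp

lemma sum_mul_log_div_uniform (P : (Fin m → Bool) → ℝ) :
    ∑ x, P x * log (P x / ((2 : ℝ) ^ m)⁻¹) = log 2 * KLu m P := by
  simp only [KLu, Finset.mul_sum, logb, div_inv_eq_mul]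
  refine Finset.sum_congr rfl fun x _ => ?_
  field_simp [(log_pos one_lt_two).ne']

lemma log_two_mul_KLu_nonneg (hP : IsPMF P) : 0 ≤ log 2 * KLu m P := by
  rw [← sum_mul_log_div_uniform]
  exact sum_mul_log_div_nonneg hP (fun _ => by positivity) (sum_uniform m)

theorem sum_sub_uniform_mul_le {f : (Fin m → Bool) → ℝ} (hP : IsPMF P) (hf : SubeTest m f)
    {t : ℝ} (ht : 0 < t) (ht2 : t ≤ 2) :
    ∑ x, (P x - ((2 : ℝ) ^ m)⁻¹) * f x ≤ log 2 * KLu m P / t + t / 8 := by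
  have hDV := sum_mul_le_sum_mul_log_div_add_log_sum_mul_exp (Q := fun _ => ((2 : ℝ) ^ m)⁻¹) hP
    (fun _ => by positivity) (fun x => t * f x)
  have hmgf := hf.2 t (by rwa [abs_of_pos ht])
  rw [sum_mul_log_div_uniform] at hDV
  have hmean : t * ∑ x, P x * f x ≤ log 2 * KLu m P + t ^ 2 / 8 := by
    rw [Finset.mul_sum]
    simp only [mul_left_comm t] at hDV ⊢
    linarith
  simp only [sub_mul, Finset.sum_sub_distrib, hf.1, sub_zero]
  rw [div_add_div _ _ ht.ne' (by norm_num), le_div_iff₀ (by positivity)]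
  nlinarith

lemma dE_uniform_le {b : ℝ} (hb : 0 ≤ b)
    (h : ∀ f, SubeTest m f → ∑ x, (P x - ((2 : ℝ) ^ m)⁻¹) * f x ≤ b) :
    dE m P (fun _ => ((2 : ℝ) ^ m)⁻¹) ≤ b :=
  Real.sSup_le (by rintro r ⟨f, hf, rfl⟩; exact h f hf) hb

end Uniform

lemma le_sqrt_of_forall_le_div_add {K r : ℝ} (hK : 0 ≤ K) (hK2 : K ≤ 1 / 2)
    (h : ∀ t, 0 < t → t ≤ 2 → r ≤ K / t + t / 8) : r ≤ √(K / 2) := by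
  rcases hK.eq_or_lt with rfl | hK
  · by_contra! hr
    have := h (min (4 * r) 2) (by positivity) (min_le_right _ _)
    have := min_le_left (4 * r) 2
    simp only [zero_div, sqrt_zero, zero_add] at *
    linarith
  · set s := √(K / 2)
    have hs : s ^ 2 = K / 2 := sq_sqrt (by positivity)
    have hs0 : 0 < s := sqrt_pos.mpr (by positivity)
    calc r ≤ K / (4 * s) + 4 * s / 8 := h _ (by positivity) (by nlinarith)
      _ = s := by field_simp; nlinarith

theorem dE_le_of_kl (m : ℕ) (P : (Fin m → Bool) → ℝ) (hP : IsPMF P) :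
    (KLu m P ≤ 1 / (2 * Real.log 2) →
      dE m P (fun _ => ((2 : ℝ) ^ m)⁻¹) ≤ Real.sqrt ((Real.log 2 / 2) * KLu m P)) ∧
    (1 / (2 * Real.log 2) < KLu m P →
      dE m P (fun _ => ((2 : ℝ) ^ m)⁻¹) ≤ (Real.log 2 / 2) * KLu m P + 1 / 4) := by
  have hK := log_two_mul_KLu_nonneg hP
  have hhalf : log 2 / 2 * KLu m P = log 2 * KLu m P / 2 := by ring
  rw [hhalf]
  refine ⟨fun hsmall => ?_, fun _ => ?_⟩
  · rw [le_div_iff₀ (by positivity)] at hsmall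
    exact dE_uniform_le (sqrt_nonneg _) fun f hf => le_sqrt_of_forall_le_div_add hK
      (by linarith) fun t ht ht2 => sum_sub_uniform_mul_le hP hf ht ht2
  · refine dE_uniform_le (by positivity) fun f hf => ?_
    have := sum_sub_uniform_mul_le hP hf two_pos le_rfl
    linarith
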